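/- arXiv:1608.05449 — 2 statements merged into one kernel-verified Lean document; each statement's English description precedes it below -/
import Mathlib

section
/- There exist an absolute constant C > 0 and p₀ such that for every prime p > p₀ and every subgroup G of 𝔽_p* with |G| > C·p^(3/4), the group G contains a non-trivial three-term arithmetic progression, i.e., there exist a ∈ G and b ∈ 𝔽_p with b ≠ 0 such that a, a+b, a+2b ∈ G. -/
/-!
Let `A ⊆ 𝔽_q^*` be a multiplicative subgroup, `ψ` a nontrivial additive character and
`S(t) = ∑_{x ∈ A} ψ(t x)`. Orthogonality of characters gives `q N = ∑_t S(t)² S(-2t)`, where `N`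
counts the solutions of `x + z = 2y` in `A³`, and Parseval gives `∑_t |S(t)|² = q |A|`. Since `S`
is constant on the cosets `tA`, each `|S(t)|²` with `t ≠ 0` occurs `|A|` times in the Parseval
sum, so `|S(t)|² ≤ q - |A|`. Isolating the term `t = 0` gives `|q N - |A|³| ≤ √q · q |A|`, hence
`N > |A|`, the number of trivial solutions `x = y = z`, as soon as `|A|² > q^{3/2} + q`.
-/

open Finset

section ThreeAPs

variable {α : Type*} [AddCancelCommMonoid α] [DecidableEq α] {A : Finset α}

def threeAPs (A : Finset α) : Finset (α × α × α) :=
  {xyz ∈ A ×ˢ A ×ˢ A | xyz.1 + xyz.2.2 = xyz.2.1 + xyz.2.1}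

lemma not_threeAPFree_of_card_lt_card_threeAPs (h : #A < #(threeAPs A)) :
    ¬ ThreeAPFree (A : Set α) := by
  intro hfree
  have hsub : threeAPs A ⊆ A.image fun x => (x, x, x) := by
    rintro ⟨x, y, z⟩ hxyz
    simp only [threeAPs, mem_filter, mem_product] at hxyz
    obtain ⟨⟨hx, hy, hz⟩, hsum⟩ := hxyz
    obtain rfl : x = y := hfree hx hy hz hsum
    obtain rfl : z = x := add_left_cancel hsum
    exact mem_image_of_mem _ hx
  exact h.not_ge ((card_le_card hsub).trans card_image_le)

end ThreeAPs

namespace AddChar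

section CommRing

variable {R : Type*} [CommRing R] {ψ : AddChar R ℂ}

noncomputable def expSum (ψ : AddChar R ℂ) (A : Finset R) (t : R) : ℂ := ∑ x ∈ A, ψ (t * x)

@[simp]
lemma expSum_zero (ψ : AddChar R ℂ) (A : Finset R) : expSum ψ A 0 = #A := by
  simp [expSum]

variable [Fintype R] [DecidableEq R]

lemma sum_sum_apply_mul_eq_card_filter {ι : Type*} (hψ : ψ.IsPrimitive) (s : Finset ι)
    (φ : ι → R) :
    ∑ t, ∑ i ∈ s, ψ (t * φ i) = Fintype.card R * #{i ∈ s | φ i = 0} := by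
  rw [sum_comm, card_filter, Nat.cast_sum, mul_sum]
  refine sum_congr rfl fun i _ => ?_
  rw [sum_mulShift _ hψ]
  split_ifs <;> simp

lemma sum_norm_expSum_sq (hψ : ψ.IsPrimitive) (A : Finset R) :
    ∑ t, ‖expSum ψ A t‖ ^ 2 = Fintype.card R * #A := by
  have expand (t : R) :
      ((‖expSum ψ A t‖ ^ 2 : ℝ) : ℂ) = ∑ xy ∈ A ×ˢ A, ψ (t * (xy.1 - xy.2)) := by
    rw [Complex.ofReal_pow, ← Complex.mul_conj', expSum, map_sum, sum_mul_sum, sum_product]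
    refine sum_congr rfl fun x _ => sum_congr rfl fun y _ => ?_
    rw [← map_neg_eq_conj, ← map_add_eq_mul, mul_sub, sub_eq_add_neg]
  apply Complex.ofReal_injective
  rw [Complex.ofReal_sum, Fintype.sum_congr _ _ expand, sum_sum_apply_mul_eq_card_filter hψ]
  simp [sub_eq_zero, ← diag_eq_filter, diag_card]

lemma sum_erase_zero_norm_expSum_sq (hψ : ψ.IsPrimitive) (A : Finset R) :
    ∑ t ∈ univ.erase 0, ‖expSum ψ A t‖ ^ 2 = Fintype.card R * #A - #A ^ 2 := by
  rw [← sum_norm_expSum_sq hψ, ← add_sum_erase _ _ (mem_univ 0), expSum_zero,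
    Complex.norm_natCast]
  ring

lemma card_mul_card_threeAPs (hψ : ψ.IsPrimitive) (A : Finset R) :
    (Fintype.card R * #(threeAPs A) : ℂ) =
      ∑ t, expSum ψ A t * expSum ψ A (-(2 * t)) * expSum ψ A t := by
  have expand (t : R) : expSum ψ A t * expSum ψ A (-(2 * t)) * expSum ψ A t =
      ∑ xyz ∈ A ×ˢ A ×ˢ A, ψ (t * (xyz.1 + xyz.2.2 - (xyz.2.1 + xyz.2.1))) := by
    simp only [expSum]
    rw [sum_mul_sum, sum_mul, sum_product]
    refine sum_congr rfl fun x _ => ?_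
    rw [sum_mul_sum, sum_product]
    refine sum_congr rfl fun y _ => sum_congr rfl fun z _ => ?_
    rw [← map_add_eq_mul, ← map_add_eq_mul]
    ring_nf
  rw [Fintype.sum_congr _ _ expand, sum_sum_apply_mul_eq_card_filter hψ]
  simp [threeAPs, sub_eq_zero]

end CommRing

lemma exists_isPrimitive (F : Type*) [Field F] [Finite F] :
    ∃ ψ : AddChar F ℂ, ψ.IsPrimitive := by
  obtain ⟨ψ, hψ⟩ := exists_apply_ne_zero.2 (one_ne_zero (α := F))
  exact ⟨ψ, IsPrimitive.of_ne_one fun h => hψ (by simp [h])⟩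

section Field

variable {F : Type*} [Field F] [DecidableEq F] {ψ : AddChar F ℂ} {A : Finset F}

lemma expSum_mul_of_forall_mul_mem {g : F} (hg : g ≠ 0) (hA : ∀ x ∈ A, g * x ∈ A) (t : F) :
    expSum ψ A (t * g) = expSum ψ A t := by
  have hinj : Function.Injective (g * ·) := mul_right_injective₀ hg
  have himage : A.image (g * ·) = A :=
    eq_of_subset_of_card_le (image_subset_iff.2 hA) (card_image_of_injective _ hinj).ge
  calc expSum ψ A (t * g) = ∑ x ∈ A, ψ (t * (g * x)) := by simp only [expSum, mul_assoc]
    _ = ∑ y ∈ A.image (g * ·), ψ (t * y) :=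
      (sum_image (f := fun y => ψ (t * y)) fun x _ y _ h => hinj h).symm
    _ = expSum ψ A t := by rw [himage, expSum]

variable [Fintype F]

lemma norm_expSum_sq_le (hψ : ψ.IsPrimitive) (hmul : ∀ g ∈ A, ∀ x ∈ A, g * x ∈ A)
    (h0 : (0 : F) ∉ A) {t : F} (ht : t ≠ 0) :
    ‖expSum ψ A t‖ ^ 2 ≤ Fintype.card F - #A := by
  have hne {g : F} (hg : g ∈ A) : g ≠ 0 := ne_of_mem_of_not_mem hg h0
  have horbit : ∑ s ∈ A.image (t * ·), ‖expSum ψ A s‖ ^ 2 = #A * ‖expSum ψ A t‖ ^ 2 := by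
    rw [sum_image fun x _ y _ h => mul_left_cancel₀ ht h,
      sum_congr rfl fun g hg => by rw [expSum_mul_of_forall_mul_mem (hne hg) (hmul g hg)],
      sum_const, nsmul_eq_mul]
  have hsub : A.image (t * ·) ⊆ univ.erase 0 := by
    simpa [image_subset_iff] using fun g hg => mul_ne_zero ht (hne hg)
  have hle : #A * ‖expSum ψ A t‖ ^ 2 ≤ Fintype.card F * #A - #A ^ 2 := by
    rw [← horbit, ← sum_erase_zero_norm_expSum_sq hψ]
    exact sum_le_sum_of_subset_of_nonneg hsub fun _ _ _ => sq_nonneg _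
  rcases A.eq_empty_or_nonempty with rfl | hA
  · simp [expSum]
  have hApos : (0 : ℝ) < #A := by exact_mod_cast hA.card_pos
  nlinarith

lemma norm_card_mul_card_threeAPs_sub_le (hψ : ψ.IsPrimitive) (h2 : (2 : F) ≠ 0)
    (hmul : ∀ g ∈ A, ∀ x ∈ A, g * x ∈ A) (h0 : (0 : F) ∉ A) :
    ‖(Fintype.card F * #(threeAPs A) - #A ^ 3 : ℂ)‖ ≤
      √(Fintype.card F) * (Fintype.card F * #A - #A ^ 2) := by
  set S := expSum ψ A
  have hsplit : (Fintype.card F * #(threeAPs A) - #A ^ 3 : ℂ) =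
      ∑ t ∈ univ.erase 0, S t * S (-(2 * t)) * S t := by
    rw [card_mul_card_threeAPs hψ, ← add_sum_erase _ _ (mem_univ 0)]
    simp only [S, mul_zero, neg_zero, expSum_zero]
    ring
  have hterm (t : F) (ht : t ∈ univ.erase 0) :
      ‖S t * S (-(2 * t)) * S t‖ ≤ ‖S t‖ ^ 2 * √(Fintype.card F) := by
    have h2t : -(2 * t) ≠ 0 := neg_ne_zero.2 (mul_ne_zero h2 (ne_of_mem_erase ht))
    have hsqrt : ‖S (-(2 * t))‖ ≤ √(Fintype.card F) :=
      (Real.le_sqrt (norm_nonneg _) (Nat.cast_nonneg _)).2 <|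
        (norm_expSum_sq_le hψ hmul h0 h2t).trans (sub_le_self _ (Nat.cast_nonneg _))
    calc ‖S t * S (-(2 * t)) * S t‖ = ‖S t‖ ^ 2 * ‖S (-(2 * t))‖ := by
          rw [norm_mul, norm_mul]; ring
      _ ≤ ‖S t‖ ^ 2 * √(Fintype.card F) := by gcongr
  rw [hsplit, ← sum_erase_zero_norm_expSum_sq hψ, mul_sum]
  exact (norm_sum_le_of_le _ hterm).trans_eq (sum_congr rfl fun t _ => mul_comm _ _)

lemma card_lt_card_threeAPs (h2 : (2 : F) ≠ 0) (hmul : ∀ g ∈ A, ∀ x ∈ A, g * x ∈ A)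
    (h0 : (0 : F) ∉ A)
    (hA : (Fintype.card F : ℝ) * √(Fintype.card F) + Fintype.card F < (#A : ℝ) ^ 2) :
    #A < #(threeAPs A) := by
  obtain ⟨ψ, hψ⟩ := exists_isPrimitive F
  have hnorm := norm_card_mul_card_threeAPs_sub_le hψ h2 hmul h0
  set q : ℝ := (Fintype.card F : ℝ)
  set D : ℝ := (#A : ℝ)
  set N : ℝ := (#(threeAPs A) : ℝ)
  have hreal : ((q * N - D ^ 3 : ℝ) : ℂ) = Fintype.card F * #(threeAPs A) - #A ^ 3 := by
    simp only [q, D, N]; push_cast; rfl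
  rw [← hreal, Complex.norm_real, Real.norm_eq_abs] at hnorm
  have hq : 0 < q := by simp only [q]; exact_mod_cast Fintype.card_pos
  have hsqrt : 0 ≤ √q := Real.sqrt_nonneg q
  have hD : 0 < D := by
    by_contra! h
    nlinarith [Nat.cast_nonneg (α := ℝ) #A]
  have hqN : q * D < q * N := by nlinarith [neg_abs_le (q * N - D ^ 3)]
  exact Nat.cast_lt.1 (lt_of_mul_lt_mul_left hqN hq.le)

end Field

end AddChar

theorem Subgroup.not_threeAPFree_of_sq_card_gt {F : Type*} [Field F] [Fintype F]
    (h2 : (2 : F) ≠ 0) (G : Subgroup Fˣ)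
    (hG : (Fintype.card F : ℝ) * √(Fintype.card F) + Fintype.card F < (Nat.card G : ℝ) ^ 2) :
    ¬ ThreeAPFree (Units.val '' (G : Set Fˣ)) := by
  classical
  set A := (Units.val '' (G : Set Fˣ)).toFinset
  have hcard : #A = Nat.card G := by
    rw [← Set.ncard_eq_toFinset_card', Set.ncard_image_of_injective _ Units.val_injective,
      ← Nat.card_coe_set_eq]
    rfl
  have hmul : ∀ g ∈ A, ∀ x ∈ A, g * x ∈ A := by
    simp only [A, Set.mem_toFinset, Set.mem_image, SetLike.mem_coe]
    rintro _ ⟨u, hu, rfl⟩ _ ⟨v, hv, rfl⟩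
    exact ⟨u * v, mul_mem hu hv, Units.val_mul u v⟩
  have h0 : (0 : F) ∉ A := by
    simp only [A, Set.mem_toFinset, Set.mem_image, not_exists, not_and]
    exact fun u _ => u.ne_zero
  have hlt := AddChar.card_lt_card_threeAPs h2 hmul h0 (hcard ▸ hG)
  simpa [A] using not_threeAPFree_of_card_lt_card_threeAPs hlt

/-- There is an absolute constant `C > 0` such that for all sufficiently large primes `p`,
every subgroup `G ≤ 𝔽_p^*` with `|G| > C·p^(3/4)` contains a non-trivial three-term
arithmetic progression `a, a+b, a+2b` with `b ≠ 0`. -/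
theorem three_term_progressions_in_multiplicative_groups :
    ∃ C : ℝ, 0 < C ∧ ∃ p₀ : ℕ, ∀ p : ℕ, p.Prime → p > p₀ →
      ∀ G : Subgroup (ZMod p)ˣ,
        (Nat.card G : ℝ) > C * (p : ℝ) ^ ((3 : ℝ) / 4) →
        ∃ a b : ZMod p, b ≠ 0 ∧
          a ∈ Units.val '' (G : Set (ZMod p)ˣ) ∧
          a + b ∈ Units.val '' (G : Set (ZMod p)ˣ) ∧
          a + 2 * b ∈ Units.val '' (G : Set (ZMod p)ˣ) := by
  refine ⟨2, two_pos, 2, fun p hp hp2 G hG => ?_⟩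
  have : Fact p.Prime := ⟨hp⟩
  have h2 : (2 : ZMod p) ≠ 0 := Ring.two_ne_zero (by rw [ZMod.ringChar_zmod_n]; omega)
  have hp0 : (0 : ℝ) < p := by exact_mod_cast hp.pos
  have hpow : ((p : ℝ) ^ ((3 : ℝ) / 4)) ^ 2 = p * √p := by
    rw [← Real.rpow_natCast, ← Real.rpow_mul hp0.le, Real.sqrt_eq_rpow,
      ← Real.rpow_one_add' hp0.le (by norm_num)]
    norm_num
  have hsqrt : 1 ≤ √(p : ℝ) := Real.one_le_sqrt.2 (by exact_mod_cast hp.one_lt.le)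
  have hcard : (Fintype.card (ZMod p) : ℝ) * √(Fintype.card (ZMod p)) + Fintype.card (ZMod p) <
      (Nat.card G : ℝ) ^ 2 := by
    rw [ZMod.card]
    nlinarith [Real.rpow_nonneg hp0.le ((3 : ℝ) / 4)]
  have hAP := G.not_threeAPFree_of_sq_card_gt h2 hcard
  simp only [ThreeAPFree, not_forall, exists_prop] at hAP
  obtain ⟨a, ha, b, hb, c, hc, habc, hab⟩ := hAP
  refine ⟨a, b - a, sub_ne_zero.2 (Ne.symm hab), ha, by rwa [add_sub_cancel], ?_⟩
  convert hc using 1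
  linear_combination -habc
end

section
/- Let p be a prime, r a positive integer, and d a positive divisor of p − 1. Suppose that for every t ∈ 𝔽_p* with 1 + s·t ≠ 0 for all s = 1, …, r, the subgroup of 𝔽_p* generated by {1+t, 1+2t, …, 1+rt} has order greater than d. Then the unique subgroup G of 𝔽_p* of order d contains no non-trivial (r+1)-term arithmetic progression, i.e., there are no a, b ∈ 𝔽_p with b ≠ 0 such that a, a+b, a+2b, …, a+rb all lie in G. -/
/-!
If `a, a + b, …, a + r b` lie in `G`, then so do the quotients `(a + s b) / a = 1 + s t` with
`t = b / a`, hence the whole subgroup they generate; its order is then at most `|G| = d`.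
-/

lemma one_add_mul_div_eq_add_mul_div {K : Type*} [Field K] {a : K} (ha : a ≠ 0) (b c : K) :
    1 + c * (b / a) = (a + c * b) / a := by
  field_simp

section ProgressionInSubgroup

variable {K : Type*} [Field K] {G : Subgroup Kˣ} {a b : K} {r : ℕ}

lemma ne_zero_of_forall_add_mul_mem
    (hall : ∀ i : ℕ, i ≤ r → a + (i : K) * b ∈ Units.val '' (G : Set Kˣ)) : a ≠ 0 := by
  obtain ⟨u, -, hu⟩ := hall 0 r.zero_le
  rw [Nat.cast_zero, zero_mul, add_zero] at hu
  exact hu ▸ u.ne_zero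

lemma one_add_mul_div_ne_zero_of_forall_add_mul_mem
    (hall : ∀ i : ℕ, i ≤ r → a + (i : K) * b ∈ Units.val '' (G : Set Kˣ)) {s : ℕ} (hs : s ≤ r) :
    1 + (s : K) * (b / a) ≠ 0 := by
  obtain ⟨u, -, hu⟩ := hall s hs
  rw [one_add_mul_div_eq_add_mul_div (ne_zero_of_forall_add_mul_mem hall), ← hu]
  exact div_ne_zero u.ne_zero (ne_zero_of_forall_add_mul_mem hall)

lemma closure_one_add_mul_div_le_of_forall_add_mul_mem
    (hall : ∀ i : ℕ, i ≤ r → a + (i : K) * b ∈ Units.val '' (G : Set Kˣ)) :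
    Subgroup.closure {u : Kˣ | ∃ s : ℕ, 1 ≤ s ∧ s ≤ r ∧ (u : K) = 1 + (s : K) * (b / a)} ≤ G := by
  rw [Subgroup.closure_le]
  rintro u ⟨s, -, hs, hu⟩
  obtain ⟨v, hvG, hv⟩ := hall s hs
  obtain ⟨v₀, hv₀G, hv₀⟩ := hall 0 r.zero_le
  have hu_eq : u = v * v₀⁻¹ := by
    ext
    rw [hu, one_add_mul_div_eq_add_mul_div (ne_zero_of_forall_add_mul_mem hall), ← hv]
    simp [hv₀, div_eq_mul_inv]
  exact hu_eq ▸ mul_mem hvG (inv_mem hv₀G)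

end ProgressionInSubgroup

theorem no_progressions_in_subgroup_of_order_d_general (p : ℕ) [Fact p.Prime] (r : ℕ)
    (d : ℕ)
    (horder : ∀ t : ZMod p, t ≠ 0 →
      (∀ s : ℕ, 1 ≤ s → s ≤ r → 1 + (s : ZMod p) * t ≠ 0) →
      Nat.card (Subgroup.closure {u : (ZMod p)ˣ | ∃ s : ℕ, 1 ≤ s ∧ s ≤ r ∧
          (u : ZMod p) = 1 + (s : ZMod p) * t}) > d)
    (G : Subgroup (ZMod p)ˣ) (hG : Nat.card G = d) :
    ¬∃ a b : ZMod p, b ≠ 0 ∧ ∀ i : ℕ, i ≤ r →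
      a + (i : ZMod p) * b ∈ Units.val '' (G : Set (ZMod p)ˣ) := by
  rintro ⟨a, b, hb, hall⟩
  have ha : a ≠ 0 := ne_zero_of_forall_add_mul_mem hall
  have hlarge := horder (b / a) (div_ne_zero hb ha)
    fun _ _ hs => one_add_mul_div_ne_zero_of_forall_add_mul_mem hall hs
  have hsmall := Subgroup.card_le_of_le (closure_one_add_mul_div_le_of_forall_add_mul_mem hall)
  omega

/-- If `d ∣ p - 1` and for every `t ∈ 𝔽_p^*` with `1 + s·t ≠ 0` for `s = 1, …, r` the
subgroup of `𝔽_p^*` generated by `1+t, …, 1+rt` has order greater than `d`, then the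
subgroup of `𝔽_p^*` of order `d` contains no non-trivial `(r+1)`-term arithmetic
progression. -/
theorem no_progressions_in_subgroup_of_order_d (p : ℕ) [Fact p.Prime] (r : ℕ) (hr : 0 < r)
    (d : ℕ) (hd : 0 < d) (hdvd : d ∣ p - 1)
    (horder : ∀ t : ZMod p, t ≠ 0 →
      (∀ s : ℕ, 1 ≤ s → s ≤ r → 1 + (s : ZMod p) * t ≠ 0) →
      Nat.card (Subgroup.closure {u : (ZMod p)ˣ | ∃ s : ℕ, 1 ≤ s ∧ s ≤ r ∧
          (u : ZMod p) = 1 + (s : ZMod p) * t}) > d)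
    (G : Subgroup (ZMod p)ˣ) (hG : Nat.card G = d) :
    ¬∃ a b : ZMod p, b ≠ 0 ∧ ∀ i : ℕ, i ≤ r →
      a + (i : ZMod p) * b ∈ Units.val '' (G : Set (ZMod p)ˣ) :=
  no_progressions_in_subgroup_of_order_d_general p r d horder G hG
end
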